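/- Let X and Y be Hermitian d×d matrices and 0 ≤ δ ≤ 1 such that ‖X‖_{S1} + ‖Y‖_{S1} ≤ 1 + δ, ‖X − Y‖_{S1} ≥ 1 − δ, Tr(X⁻) ≤ δ, and Tr(Y⁻) ≤ δ, where X = X⁺ − X⁻ is the decomposition of X into positive and negative parts (and similarly for Y). Let P be the orthogonal projection onto the nonnegative eigenspace of X − Y and Q = Id − P. Then Tr(PX) ≥ ‖X‖_{S1} − 4δ and Tr(QY) ≥ ‖Y‖_{S1} − 4δ. -/

import Mathlib

/-!
The positive and negative parts, the projection `P` and the trace norm `‖A‖₁ = Tr √(AᴴA)` are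
all functional calculus of a Hermitian matrix, so their traces are sums over eigenvalues. This
gives, with `D = X - Y`, `Tr(PD) = (‖D‖₁ + Tr D) / 2` and `Tr X = ‖X‖₁ - 2 Tr X⁻`. Moreover
`Tr(PY) ≥ -Tr Y⁻` for every `0 ≤ P ≤ 1`, since `PY + Y⁻ = PY⁺ + (1 - P)Y⁻` has nonnegative trace,
being a sum of products of positive semidefinite matrices. Writing `Tr(PX) = Tr(PD) + Tr(PY)` and
`Tr(QY) = Tr(QX) - Tr D + Tr(PD)`, both bounds follow linearly from the hypotheses.
-/

open Matrix ComplexOrder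

/-- The Frobenius norm of a complex square matrix: `(Tr(AᴴA))^{1/2}`. -/
noncomputable def frobNorm {d : ℕ} (A : Matrix (Fin d) (Fin d) ℂ) : ℝ :=
  Real.sqrt ((Aᴴ * A).trace.re)

/-- The Schatten-1 (nuclear) norm: the sum of singular values, i.e. `Tr((AᴴA)^{1/2})`. -/
noncomputable def nucNorm {d : ℕ} (A : Matrix (Fin d) (Fin d) ℂ) : ℝ :=
  (((Matrix.posSemidef_conjTranspose_mul_self A).1.eigenvectorUnitary : Matrix (Fin d) (Fin d) ℂ) *
    Matrix.diagonal (fun i => ((Real.sqrt ((Matrix.posSemidef_conjTranspose_mul_self A).1.eigenvalues i) : ℝ) : ℂ)) *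
    (star (Matrix.posSemidef_conjTranspose_mul_self A).1.eigenvectorUnitary :
      Matrix (Fin d) (Fin d) ℂ)).trace.re


/-- The positive part `X⁺` of a Hermitian matrix, via the spectral decomposition. -/
noncomputable def posPart {d : ℕ} {X : Matrix (Fin d) (Fin d) ℂ} (hX : X.IsHermitian) :
    Matrix (Fin d) (Fin d) ℂ :=
  (hX.eigenvectorUnitary : Matrix (Fin d) (Fin d) ℂ) *
    Matrix.diagonal (fun i => ((max (hX.eigenvalues i) 0 : ℝ) : ℂ)) *
    (hX.eigenvectorUnitary : Matrix (Fin d) (Fin d) ℂ)ᴴ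

/-- The negative part `X⁻` of a Hermitian matrix, via the spectral decomposition,
so that `X = X⁺ - X⁻`. -/
noncomputable def negPart {d : ℕ} {X : Matrix (Fin d) (Fin d) ℂ} (hX : X.IsHermitian) :
    Matrix (Fin d) (Fin d) ℂ :=
  (hX.eigenvectorUnitary : Matrix (Fin d) (Fin d) ℂ) *
    Matrix.diagonal (fun i => ((max (-hX.eigenvalues i) 0 : ℝ) : ℂ)) *
    (hX.eigenvectorUnitary : Matrix (Fin d) (Fin d) ℂ)ᴴ

/-- The orthogonal projection onto the direct sum of eigenspaces of a Hermitian matrix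
with nonnegative eigenvalues. -/
noncomputable def nonnegProj {d : ℕ} {H : Matrix (Fin d) (Fin d) ℂ} (hH : H.IsHermitian) :
    Matrix (Fin d) (Fin d) ℂ :=
  (hH.eigenvectorUnitary : Matrix (Fin d) (Fin d) ℂ) *
    Matrix.diagonal (fun i => if 0 ≤ hH.eigenvalues i then (1 : ℂ) else 0) *
    (hH.eigenvectorUnitary : Matrix (Fin d) (Fin d) ℂ)ᴴ


open scoped MatrixOrder

namespace Matrix

variable {n 𝕜 : Type*} [Fintype n]

lemma re_trace_nonneg {A : Matrix n n ℂ} (hA : 0 ≤ A) : 0 ≤ A.trace.re :=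
  (Complex.nonneg_iff.1 hA.posSemidef.trace_nonneg).1

variable [DecidableEq n] [RCLike 𝕜]

lemma IsHermitian.cfc_eq_conj {A : Matrix n n 𝕜} (hA : A.IsHermitian) (f : ℝ → ℝ) :
    cfc f A = (hA.eigenvectorUnitary : Matrix n n 𝕜) *
      diagonal (fun i => (f (hA.eigenvalues i) : 𝕜)) * (hA.eigenvectorUnitary : Matrix n n 𝕜)ᴴ := by
  rw [hA.cfc_eq, IsHermitian.cfc, Unitary.conjStarAlgAut_apply]
  rfl

lemma trace_mul_nonneg {A B : Matrix n n 𝕜} (hA : 0 ≤ A) (hB : 0 ≤ B) : 0 ≤ (A * B).trace := by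
  have hsqrt : (CFC.sqrt A)ᴴ = CFC.sqrt A := (CFC.sqrt_nonneg A).isSelfAdjoint
  have hconj : 0 ≤ CFC.sqrt A * B * CFC.sqrt A := by
    simpa [star_eq_conjTranspose, hsqrt] using star_left_conjugate_nonneg hB (CFC.sqrt A)
  calc (0 : 𝕜) ≤ (CFC.sqrt A * B * CFC.sqrt A).trace := hconj.posSemidef.trace_nonneg
    _ = (A * B).trace := by rw [trace_mul_cycle, CFC.sqrt_mul_sqrt_self A]

section Complex

lemma IsHermitian.re_trace_eq_sum_eigenvalues {A : Matrix n n ℂ} (hA : A.IsHermitian) :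
    A.trace.re = ∑ i, hA.eigenvalues i := by
  simp [hA.trace_eq_sum_eigenvalues, Complex.re_sum]

lemma IsHermitian.re_trace_cfc {A : Matrix n n ℂ} (hA : A.IsHermitian) (f : ℝ → ℝ) :
    (cfc f A).trace.re = ∑ i, f (hA.eigenvalues i) := by
  rw [hA.cfc_eq_conj, trace_mul_cycle, ← star_eq_conjTranspose,
    Unitary.star_mul_self_of_mem hA.eigenvectorUnitary.2, one_mul, trace_diagonal, Complex.re_sum]
  simp

lemma neg_re_trace_le_re_trace_mul_sub {P B C : Matrix n n ℂ} (hP₀ : 0 ≤ P) (hP₁ : P ≤ 1)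
    (hB : 0 ≤ B) (hC : 0 ≤ C) : -C.trace.re ≤ (P * (B - C)).trace.re := by
  have hsplit : P * (B - C) + C = P * B + (1 - P) * C := by noncomm_ring
  have hnonneg : 0 ≤ (P * (B - C) + C).trace := by
    rw [hsplit, trace_add]
    exact add_nonneg (trace_mul_nonneg hP₀ hB) (trace_mul_nonneg (sub_nonneg.2 hP₁) hC)
  have hre := (Complex.nonneg_iff.1 hnonneg).1
  rw [trace_add, Complex.add_re] at hre
  linarith

end Complex

end Matrix

lemma nucNorm_eq_re_trace_abs {d : ℕ} (A : Matrix (Fin d) (Fin d) ℂ) :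
    nucNorm A = (CFC.abs A).trace.re := by
  have hAA := posSemidef_conjTranspose_mul_self A
  rw [CFC.abs, CFC.sqrt_eq_real_sqrt _ (by simpa [star_eq_conjTranspose] using hAA.nonneg),
    cfcₙ_eq_cfc, star_eq_conjTranspose, hAA.1.cfc_eq_conj]
  rfl

namespace Matrix.IsHermitian

variable {d : ℕ} {X H : Matrix (Fin d) (Fin d) ℂ}

lemma posPart_eq_cfc (hX : X.IsHermitian) : posPart hX = cfc (fun t : ℝ => max t 0) X := by
  rw [hX.cfc_eq_conj]
  rfl

lemma negPart_eq_cfc (hX : X.IsHermitian) : negPart hX = cfc (fun t : ℝ => max (-t) 0) X := by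
  rw [hX.cfc_eq_conj]
  rfl

lemma nonnegProj_eq_cfc (hH : H.IsHermitian) :
    nonnegProj hH = cfc (fun t : ℝ => if 0 ≤ t then 1 else 0) H := by
  rw [hH.cfc_eq_conj, nonnegProj]
  congr 3 with i
  split_ifs <;> simp

lemma posPart_sub_negPart (hX : X.IsHermitian) : posPart hX - negPart hX = X := by
  rw [posPart_eq_cfc, negPart_eq_cfc, ← cfc_sub _ _ X (X.finite_real_spectrum.continuousOn _)
    (X.finite_real_spectrum.continuousOn _)]
  conv_rhs => rw [← cfc_id' ℝ X hX.isSelfAdjoint]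
  congr with t
  simp [max_zero_sub_max_neg_zero_eq_self]

lemma posPart_nonneg (hX : X.IsHermitian) : 0 ≤ posPart hX := by
  rw [posPart_eq_cfc]
  exact cfc_nonneg fun t _ => le_max_right t 0

lemma negPart_nonneg (hX : X.IsHermitian) : 0 ≤ negPart hX := by
  rw [negPart_eq_cfc]
  exact cfc_nonneg fun t _ => le_max_right (-t) 0

lemma nonnegProj_nonneg (hH : H.IsHermitian) : 0 ≤ nonnegProj hH := by
  rw [nonnegProj_eq_cfc]
  exact cfc_nonneg fun t _ => by split_ifs <;> norm_num

lemma nonnegProj_le_one (hH : H.IsHermitian) : nonnegProj hH ≤ 1 := by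
  rw [nonnegProj_eq_cfc]
  exact cfc_le_one _ _ fun t _ => by split_ifs <;> norm_num

lemma nucNorm_eq_sum_abs_eigenvalues (hX : X.IsHermitian) :
    nucNorm X = ∑ i, |hX.eigenvalues i| := by
  rw [nucNorm_eq_re_trace_abs, CFC.abs_eq_cfc_norm X hX.isSelfAdjoint]
  exact hX.re_trace_cfc _

lemma re_trace_eq_nucNorm_sub_two_mul_negPart (hX : X.IsHermitian) :
    X.trace.re = nucNorm X - 2 * (negPart hX).trace.re := by
  rw [hX.re_trace_eq_sum_eigenvalues, hX.nucNorm_eq_sum_abs_eigenvalues, hX.negPart_eq_cfc,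
    hX.re_trace_cfc, Finset.mul_sum, ← Finset.sum_sub_distrib]
  congr with i
  rcases le_total 0 (hX.eigenvalues i) with h | h
  · simp [abs_of_nonneg h, h]
  · simp [abs_of_nonpos h, h]; ring

lemma re_trace_nonnegProj_mul_self (hH : H.IsHermitian) :
    (nonnegProj hH * H).trace.re = (nucNorm H + H.trace.re) / 2 := by
  have hcont (f : ℝ → ℝ) : ContinuousOn f (spectrum ℝ H) := H.finite_real_spectrum.continuousOn f
  have hPH : nonnegProj hH * H = cfc (fun t : ℝ => (if 0 ≤ t then 1 else 0) * t) H := by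
    rw [cfc_mul _ _ H (hcont _) (hcont _), cfc_id' ℝ H hH.isSelfAdjoint, nonnegProj_eq_cfc]
  rw [hPH, hH.re_trace_cfc, hH.nucNorm_eq_sum_abs_eigenvalues, hH.re_trace_eq_sum_eigenvalues,
    ← Finset.sum_add_distrib, Finset.sum_div]
  congr with i
  rcases le_total 0 (hH.eigenvalues i) with h | h
  · simp [abs_of_nonneg h, h]
  · rcases h.eq_or_lt with h | h
    · simp [h]
    · simp [abs_of_neg h, h.not_ge]

end Matrix.IsHermitian

theorem trace_proj_ge_general {d : ℕ} (X Y : Matrix (Fin d) (Fin d) ℂ)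
    (hX : X.IsHermitian) (hY : Y.IsHermitian) (δ : ℝ)
    (hsum : nucNorm X + nucNorm Y ≤ 1 + δ)
    (hdiff : 1 - δ ≤ nucNorm (X - Y))
    (hXneg : (negPart hX).trace.re ≤ δ)
    (hYneg : (negPart hY).trace.re ≤ δ) :
    nucNorm X - 4 * δ ≤ ((nonnegProj (hX.sub hY)) * X).trace.re ∧
    nucNorm Y - 4 * δ ≤ (((1 : Matrix (Fin d) (Fin d) ℂ) - nonnegProj (hX.sub hY)) * Y).trace.re := by
  set P := nonnegProj (hX.sub hY)
  have hPD := (hX.sub hY).re_trace_nonnegProj_mul_self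
  have hTX := hX.re_trace_eq_nucNorm_sub_two_mul_negPart
  have hTY := hY.re_trace_eq_nucNorm_sub_two_mul_negPart
  have hPY : -(negPart hY).trace.re ≤ (P * Y).trace.re := by
    simpa only [hY.posPart_sub_negPart] using neg_re_trace_le_re_trace_mul_sub
      (hX.sub hY).nonnegProj_nonneg (hX.sub hY).nonnegProj_le_one hY.posPart_nonneg
      hY.negPart_nonneg
  have hQX : -(negPart hX).trace.re ≤ ((1 - P) * X).trace.re := by
    simpa only [hX.posPart_sub_negPart] using neg_re_trace_le_re_trace_mul_sub
      (sub_nonneg.2 (hX.sub hY).nonnegProj_le_one) (sub_le_self _ (hX.sub hY).nonnegProj_nonneg)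
      hX.posPart_nonneg hX.negPart_nonneg
  have hXneg₀ := re_trace_nonneg hX.negPart_nonneg
  have hYneg₀ := re_trace_nonneg hY.negPart_nonneg
  simp only [mul_sub, sub_mul, one_mul, trace_sub, Complex.sub_re] at hPD hQX ⊢
  constructor <;> linarith

/-- Lemma: if Hermitian `X, Y` satisfy `‖X‖₁ + ‖Y‖₁ ≤ 1 + δ`, `‖X - Y‖₁ ≥ 1 - δ`,
`Tr(X⁻) ≤ δ` and `Tr(Y⁻) ≤ δ`, and `P` is the projection onto the nonnegative
eigenspace of `X - Y` with `Q = Id - P`, then `Tr(PX) ≥ ‖X‖₁ - 4δ` and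
`Tr(QY) ≥ ‖Y‖₁ - 4δ`. -/
theorem trace_proj_ge {d : ℕ} (X Y : Matrix (Fin d) (Fin d) ℂ)
    (hX : X.IsHermitian) (hY : Y.IsHermitian) (δ : ℝ) (hδ0 : 0 ≤ δ) (hδ1 : δ ≤ 1)
    (hsum : nucNorm X + nucNorm Y ≤ 1 + δ)
    (hdiff : 1 - δ ≤ nucNorm (X - Y))
    (hXneg : (negPart hX).trace.re ≤ δ)
    (hYneg : (negPart hY).trace.re ≤ δ) :
    nucNorm X - 4 * δ ≤ ((nonnegProj (hX.sub hY)) * X).trace.re ∧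
    nucNorm Y - 4 * δ ≤ (((1 : Matrix (Fin d) (Fin d) ℂ) - nonnegProj (hX.sub hY)) * Y).trace.re :=
  trace_proj_ge_general X Y hX hY δ hsum hdiff hXneg hYneg
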